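/- arXiv:2207.04641 — 5 statements merged into one kernel-verified Lean document; each statement's English description precedes it below -/
import Mathlib

section
/- Let G be a finite group. Then the number of maximal cyclic subgroups of G is not equal to 2; that is, it is impossible for G to have exactly two maximal cyclic subgroups. -/
/-- A subgroup `M` of `G` is a maximal cyclic subgroup if it is cyclic and is not properly
contained in any cyclic subgroup of `G` other than itself. -/
def IsMaximalCyclic {G : Type*} [Group G] (M : Subgroup G) : Prop :=
  (∃ g : G, M = Subgroup.zpowers g) ∧
    ∀ K : Subgroup G, (∃ g : G, K = Subgroup.zpowers g) → M ≤ K → M = K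

/-- The complement of the enhanced power graph of a group `G`: distinct `x, y` are adjacent
iff no cyclic subgroup of `G` contains both. -/
def coPE (G : Type*) [Group G] : SimpleGraph G where
  Adj x y := x ≠ y ∧ ¬∃ z : G, x ∈ Subgroup.zpowers z ∧ y ∈ Subgroup.zpowers z
  symm := by
    constructor
    rintro x y ⟨h1, h2⟩
    exact ⟨h1.symm, fun ⟨z, hz⟩ => h2 ⟨z, hz.2, hz.1⟩⟩
  loopless := by constructor; rintro x ⟨h, -⟩; exact h rfl

/-! Two maximal cyclic subgroups would cover a finite group, since every element lies in a maximal
cyclic subgroup. A group is never the union of two proper subgroups, so one of them is the whole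
group, and then it contains the other, contradicting maximality. -/

theorem Subgroup.eq_top_or_eq_top_of_forall_mem_or_mem {G : Type*} [Group G] {H K : Subgroup G}
    (hHK : ∀ g, g ∈ H ∨ g ∈ K) : H = ⊤ ∨ K = ⊤ := by
  simp only [Subgroup.eq_top_iff']
  by_contra! ⟨⟨a, haH⟩, b, hbK⟩
  have haK : a ∈ K := (hHK a).resolve_left haH
  have hbH : b ∈ H := (hHK b).resolve_right hbK
  rcases hHK (a * b) with habH | habK
  · exact haH ((H.mul_mem_cancel_right hbH).mp habH)
  · exact hbK ((K.mul_mem_cancel_left haK).mp habK)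

theorem isMaximalCyclic_iff_maximal {G : Type*} [Group G] {M : Subgroup G} :
    IsMaximalCyclic M ↔ Maximal (fun K : Subgroup G ↦ ∃ g, K = Subgroup.zpowers g) M :=
  and_congr_right fun _ ↦ forall₂_congr fun _ _ ↦
    ⟨fun h hle ↦ (h hle).ge, fun h hle ↦ le_antisymm hle (h hle)⟩

theorem IsMaximalCyclic.eq_of_le {G : Type*} [Group G] {M K : Subgroup G}
    (hM : IsMaximalCyclic M) (hK : IsMaximalCyclic K) (hle : M ≤ K) : M = K :=
  hM.2 K hK.1 hle

theorem exists_isMaximalCyclic_mem {G : Type*} [Group G] [Finite G] (g : G) :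
    ∃ M : Subgroup G, IsMaximalCyclic M ∧ g ∈ M := by
  have hfin : {K : Subgroup G | ∃ h, K = Subgroup.zpowers h}.Finite := Set.toFinite _
  obtain ⟨M, hgM, hM⟩ := hfin.exists_le_maximal (a := Subgroup.zpowers g) ⟨g, rfl⟩
  exact ⟨M, isMaximalCyclic_iff_maximal.mpr hM, hgM (Subgroup.mem_zpowers g)⟩

theorem maximalCyclic_card_ne_two {G : Type*} [Group G] [Finite G] :
    Nat.card {M : Subgroup G // IsMaximalCyclic M} ≠ 2 := by
  intro h
  obtain ⟨M₁, M₂, hne, hcover⟩ := Nat.card_eq_two_iff.mp h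
  have hmem : ∀ g : G, g ∈ M₁.1 ∨ g ∈ M₂.1 := fun g ↦ by
    obtain ⟨M, hM, hgM⟩ := exists_isMaximalCyclic_mem g
    have : (⟨M, hM⟩ : {M : Subgroup G // IsMaximalCyclic M}) ∈ ({M₁, M₂} : Set _) :=
      hcover ▸ Set.mem_univ _
    rcases this with rfl | rfl
    exacts [Or.inl hgM, Or.inr hgM]
  rcases Subgroup.eq_top_or_eq_top_of_forall_mem_or_mem hmem with htop | htop
  · exact hne (Subtype.ext (M₂.2.eq_of_le M₁.2 (htop ▸ le_top)).symm)
  · exact hne (Subtype.ext (M₁.2.eq_of_le M₂.2 (htop ▸ le_top)))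
end

section
/- Let G be a finite non-cyclic group. Then the complement of the enhanced power graph of G has exactly one connected component apart from isolated vertices; equivalently, any two non-isolated vertices of the complement of the enhanced power graph of G are connected by a path in that graph. -/
/-! Every element lies in a maximal cyclic subgroup `⟨m⟩`, and a neighbour `x` of `a ∈ ⟨m⟩` in
`coPE G` is also a neighbour of `m`: a cyclic subgroup containing `x` and `m` contains `⟨m⟩`,
so equals it by maximality, and would then contain both `x` and `a`. Generators of distinct
maximal cyclic subgroups are adjacent, and a non-cyclic group has at least two maximal cyclic
subgroups, so any two such generators are joined by a path of length at most two. -/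

section

open Subgroup

variable {G : Type*} [Group G]

theorem IsMaximalCyclic.zpowers_eq_of_mem {m z : G} (hm : IsMaximalCyclic (zpowers m))
    (hz : m ∈ zpowers z) : zpowers m = zpowers z :=
  hm.2 _ ⟨z, rfl⟩ (zpowers_le.2 hz)

theorem exists_isMaximalCyclic_zpowers_mem [Finite G] (g : G) :
    ∃ m : G, IsMaximalCyclic (zpowers m) ∧ g ∈ zpowers m := by
  obtain ⟨M, ⟨⟨m, rfl⟩, hgM⟩, hmax⟩ := Set.Finite.exists_maximalFor id
    {K : Subgroup G | (∃ h, K = zpowers h) ∧ g ∈ K} (Set.toFinite _)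
    ⟨zpowers g, ⟨g, rfl⟩, mem_zpowers g⟩
  exact ⟨m, ⟨⟨m, rfl⟩, fun K hK hle => le_antisymm hle (hmax ⟨hK, hle hgM⟩ hle)⟩, hgM⟩

theorem exists_isMaximalCyclic_zpowers_ne [Finite G] (hG : ¬IsCyclic G) (m : G) :
    ∃ n : G, IsMaximalCyclic (zpowers n) ∧ zpowers n ≠ zpowers m := by
  obtain ⟨g, hg⟩ : ∃ g : G, g ∉ zpowers m := by
    by_contra! h
    exact hG ⟨⟨m, h⟩⟩
  obtain ⟨n, hn, hgn⟩ := exists_isMaximalCyclic_zpowers_mem g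
  exact ⟨n, hn, fun h => hg (h ▸ hgn)⟩

namespace coPE

theorem adj_of_isMaximalCyclic {m n : G} (hm : IsMaximalCyclic (zpowers m))
    (hn : IsMaximalCyclic (zpowers n)) (hne : zpowers m ≠ zpowers n) : (coPE G).Adj m n :=
  ⟨fun h => hne (h ▸ rfl), fun ⟨_, hmz, hnz⟩ =>
    hne ((hm.zpowers_eq_of_mem hmz).trans (hn.zpowers_eq_of_mem hnz).symm)⟩

theorem adj_of_adj_of_mem_zpowers {x a m : G} (h : (coPE G).Adj x a)
    (hm : IsMaximalCyclic (zpowers m)) (ha : a ∈ zpowers m) : (coPE G).Adj x m := by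
  have hx : x ∉ zpowers m := fun hx => h.2 ⟨m, hx, ha⟩
  exact ⟨fun e => hx (e ▸ mem_zpowers x), fun ⟨_, hxz, hmz⟩ =>
    hx (hm.zpowers_eq_of_mem hmz ▸ hxz)⟩

theorem reachable_of_isMaximalCyclic [Finite G] (hG : ¬IsCyclic G) {m n : G}
    (hm : IsMaximalCyclic (zpowers m)) (hn : IsMaximalCyclic (zpowers n)) :
    (coPE G).Reachable m n := by
  by_cases h : zpowers m = zpowers n
  · obtain ⟨p, hp, hpm⟩ := exists_isMaximalCyclic_zpowers_ne hG m
    exact (adj_of_isMaximalCyclic hm hp hpm.symm).reachable.trans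
      (adj_of_isMaximalCyclic hp hn (h ▸ hpm)).reachable
  · exact (adj_of_isMaximalCyclic hm hn h).reachable

end coPE

end

theorem coPE_one_component {G : Type*} [Group G] [Finite G] (hG : ¬ IsCyclic G)
    (x y : G) (hx : ∃ a, (coPE G).Adj x a) (hy : ∃ b, (coPE G).Adj y b) :
    (coPE G).Reachable x y := by
  obtain ⟨a, ha⟩ := hx
  obtain ⟨b, hb⟩ := hy
  obtain ⟨m, hm, ham⟩ := exists_isMaximalCyclic_zpowers_mem a
  obtain ⟨n, hn, hbn⟩ := exists_isMaximalCyclic_zpowers_mem b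
  have hxm := coPE.adj_of_adj_of_mem_zpowers ha hm ham
  have hyn := coPE.adj_of_adj_of_mem_zpowers hb hn hbn
  exact hxm.reachable.trans ((coPE.reachable_of_isMaximalCyclic hG hm hn).trans hyn.reachable.symm)
end

section
/- Let G be a finite group. Then the girth of the complement of the enhanced power graph of G is either 3 or infinity; more precisely, if G is cyclic the girth is infinity (the graph has no cycles), and if G is non-cyclic the girth is 3. -/
/-!
In a cyclic group every pair of elements lies in the whole group, so `coPE G` has no edges.
Otherwise, a finite group has a maximal cyclic subgroup `⟨g⟩ ≠ G`; for `x ∉ ⟨g⟩` no cyclic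
subgroup contains both `g` and `x`. Then `g, x, g * x` is a triangle, since any cyclic subgroup
containing two of them contains the third.
-/

namespace SimpleGraph

variable {V : Type*} {G : SimpleGraph V} {a b c : V}

lemma egirth_le_three_of_adj (hab : G.Adj a b) (hbc : G.Adj b c) (hca : G.Adj c a) :
    G.egirth ≤ 3 := by
  classical
  obtain ⟨u, w, hw, hlen⟩ := G.is3Clique_iff_exists_cycle_length_three.mp
    ⟨{a, b, c}, is3Clique_triple_iff.mpr ⟨hab, hca.symm, hbc⟩⟩
  simpa [hlen] using egirth_le_length hw

end SimpleGraph

section coPE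

variable {G : Type*} [Group G]

lemma coPE_adj_iff {x y : G} :
    (coPE G).Adj x y ↔ ¬∃ z : G, x ∈ Subgroup.zpowers z ∧ y ∈ Subgroup.zpowers z := by
  refine ⟨And.right, fun h => ⟨?_, h⟩⟩
  rintro rfl
  exact h ⟨x, Subgroup.mem_zpowers x, Subgroup.mem_zpowers x⟩

lemma coPE_eq_bot [IsCyclic G] : coPE G = ⊥ := by
  ext x y
  simp only [coPE_adj_iff, SimpleGraph.bot_adj, iff_false, not_not]
  obtain ⟨z, hz⟩ := IsCyclic.exists_generator (α := G)
  exact ⟨z, hz x, hz y⟩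

lemma coPE_adj_mul_right {a b : G} (h : (coPE G).Adj a b) : (coPE G).Adj b (a * b) := by
  rw [coPE_adj_iff] at h ⊢
  rintro ⟨z, hb, hab⟩
  exact h ⟨z, by simpa using mul_mem hab (inv_mem hb), hb⟩

lemma coPE_adj_mul_left {a b : G} (h : (coPE G).Adj a b) : (coPE G).Adj (a * b) a := by
  rw [coPE_adj_iff] at h ⊢
  rintro ⟨z, hab, ha⟩
  exact h ⟨z, ha, by simpa using mul_mem (inv_mem ha) hab⟩

lemma coPE_egirth_le_three_of_adj {a b : G} (h : (coPE G).Adj a b) : (coPE G).egirth ≤ 3 :=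
  SimpleGraph.egirth_le_three_of_adj h (coPE_adj_mul_right h) (coPE_adj_mul_left h)

lemma exists_isMaximalCyclic [Finite G] : ∃ M : Subgroup G, IsMaximalCyclic M := by
  have hfin : {K : Subgroup G | ∃ g, K = Subgroup.zpowers g}.Finite := Set.toFinite _
  obtain ⟨M, hM, hmax⟩ := hfin.exists_maximal ⟨⊥, 1, Subgroup.zpowers_one_eq_bot.symm⟩
  exact ⟨M, hM, fun K hK hMK => le_antisymm hMK (hmax hK hMK)⟩

lemma IsMaximalCyclic.coPE_adj {M : Subgroup G} (hM : IsMaximalCyclic M) {g x : G}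
    (hg : M = Subgroup.zpowers g) (hx : x ∉ M) : (coPE G).Adj g x := by
  rw [coPE_adj_iff]
  rintro ⟨z, hgz, hxz⟩
  have hMz : M = Subgroup.zpowers z := hM.2 _ ⟨z, rfl⟩ (hg ▸ Subgroup.zpowers_le.mpr hgz)
  exact hx (hMz ▸ hxz)

lemma exists_coPE_adj_of_not_isCyclic [Finite G] (hG : ¬IsCyclic G) :
    ∃ a b : G, (coPE G).Adj a b := by
  obtain ⟨M, hM⟩ := exists_isMaximalCyclic (G := G)
  obtain ⟨g, hg⟩ := hM.1
  have hx : ∃ x, x ∉ M := by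
    by_contra! hall
    exact hG ⟨g, fun x => Subgroup.mem_zpowers_iff.mp (hg ▸ hall x)⟩
  obtain ⟨x, hx⟩ := hx
  exact ⟨g, x, hM.coPE_adj hg hx⟩

end coPE

theorem coPE_girth {G : Type*} [Group G] [Finite G] :
    (IsCyclic G → (coPE G).egirth = ⊤) ∧ (¬ IsCyclic G → (coPE G).egirth = 3) := by
  refine ⟨fun _ => by simp [coPE_eq_bot], fun hG => ?_⟩
  obtain ⟨a, b, hab⟩ := exists_coPE_adj_of_not_isCyclic hG
  exact le_antisymm (coPE_egirth_le_three_of_adj hab) SimpleGraph.three_le_egirth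
end

section
/- Let G be a finite non-cyclic group. Then the graph co-P_E(G*) is a complete graph if and only if G is an elementary abelian 2-group, i.e., G is isomorphic to a direct product Z_2 × Z_2 × ⋯ × Z_2 (equivalently, every element of G satisfies x² = e). -/
/-- The set of non-isolated vertices of `coPE G`. -/
def nonIsolated (G : Type*) [Group G] : Set G := {x | ∃ y, (coPE G).Adj x y}

/-- The subgraph of `coPE G` induced by its non-isolated vertices. -/
def coPEstar (G : Type*) [Group G] : SimpleGraph (nonIsolated G) :=
  (coPE G).induce (nonIsolated G)

/-!
If every element is an involution, each cyclic subgroup is `{1, z}`; since `1` is isolated,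
two distinct non-isolated vertices never share a cyclic subgroup. Conversely, if `x * x ≠ 1`,
enlarge `⟨x⟩` to a maximal cyclic subgroup `⟨g⟩`. As `G` is not cyclic, some `b` lies outside
`⟨g⟩` and no cyclic subgroup contains both `g` and `b`, so `g` and `g⁻¹` are non-isolated.
They are distinct because `g * g ≠ 1`, yet both lie in `⟨g⟩`, so `coPEstar G` is not complete.
-/

open Subgroup

section Zpowers

variable {G : Type*} [Group G] {g x : G}

theorem mul_self_eq_one_of_mem_zpowers (hg : g * g = 1) (hx : x ∈ zpowers g) : x * x = 1 := by
  obtain ⟨n, rfl⟩ := hx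
  rw [← (Commute.refl g).mul_zpow, hg, one_zpow]

theorem eq_one_or_eq_of_mem_zpowers (hg : g * g = 1) (hx : x ∈ zpowers g) : x = 1 ∨ x = g := by
  obtain ⟨n, rfl⟩ := hx
  have hg2 : g ^ (2 : ℤ) = 1 := by rw [zpow_two, hg]
  obtain ⟨k, rfl | rfl⟩ := Int.even_or_odd' n
  · left
    simp only [zpow_mul, hg2, one_zpow]
  · right
    simp only [zpow_add, zpow_mul, hg2, one_zpow, one_mul, zpow_one]

theorem exists_mem_zpowers_isMaximalCyclic [Finite G] (x : G) :
    ∃ g, x ∈ zpowers g ∧ IsMaximalCyclic (zpowers g) := by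
  have : Nonempty {g : G // x ∈ zpowers g} := ⟨⟨x, mem_zpowers x⟩⟩
  obtain ⟨⟨g, hxg⟩, hmax⟩ := Finite.exists_max fun p : {g : G // x ∈ zpowers g} => orderOf p.1
  refine ⟨g, hxg, ⟨g, rfl⟩, ?_⟩
  rintro K ⟨z, rfl⟩ hle
  refine eq_of_le_of_card_ge hle ?_
  rw [Nat.card_zpowers, Nat.card_zpowers]
  exact hmax ⟨z, hle hxg⟩

end Zpowers

section CoPE

variable {G : Type*} [Group G]

theorem coPE_adj_inv_left {x y : G} : (coPE G).Adj x⁻¹ y ↔ (coPE G).Adj x y := by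
  simp only [coPE, inv_mem_iff]
  constructor
  · rintro ⟨-, h⟩
    exact ⟨fun hxy => h ⟨y, hxy ▸ mem_zpowers x, mem_zpowers y⟩, h⟩
  · rintro ⟨-, h⟩
    refine ⟨fun hxy => h ⟨x, mem_zpowers x, ?_⟩, h⟩
    rw [← hxy]
    exact inv_mem (mem_zpowers x)

theorem inv_mem_nonIsolated {x : G} (hx : x ∈ nonIsolated G) : x⁻¹ ∈ nonIsolated G :=
  let ⟨y, hxy⟩ := hx
  ⟨y, coPE_adj_inv_left.mpr hxy⟩

theorem one_notMem_nonIsolated : (1 : G) ∉ nonIsolated G :=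
  fun ⟨y, _, h⟩ => h ⟨y, one_mem _, mem_zpowers y⟩

theorem mem_nonIsolated_of_isMaximalCyclic (hG : ¬IsCyclic G) {g : G}
    (hmax : IsMaximalCyclic (zpowers g)) : g ∈ nonIsolated G := by
  obtain ⟨b, hb⟩ : ∃ b, b ∉ zpowers g := by
    by_contra! h
    exact hG ⟨g, h⟩
  refine ⟨b, fun hgb => hb (hgb ▸ mem_zpowers g), ?_⟩
  rintro ⟨z, hgz, hbz⟩
  exact hb (hmax.2 _ ⟨z, rfl⟩ (zpowers_le.mpr hgz) ▸ hbz)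

theorem coPEstar_eq_top_of_mul_self_eq_one (h : ∀ x : G, x * x = 1) : coPEstar G = ⊤ := by
  ext ⟨a, ha⟩ ⟨b, hb⟩
  rw [SimpleGraph.top_adj, ne_eq, Subtype.mk.injEq]
  refine ⟨fun hab => hab.1, fun hab => ⟨hab, ?_⟩⟩
  rintro ⟨z, haz, hbz⟩
  have ha1 : a ≠ 1 := fun h1 => one_notMem_nonIsolated (h1 ▸ ha)
  have hb1 : b ≠ 1 := fun h1 => one_notMem_nonIsolated (h1 ▸ hb)
  exact hab (((eq_one_or_eq_of_mem_zpowers (h z) haz).resolve_left ha1).trans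
    ((eq_one_or_eq_of_mem_zpowers (h z) hbz).resolve_left hb1).symm)

theorem mul_self_eq_one_of_coPEstar_eq_top [Finite G] (hG : ¬IsCyclic G)
    (h : coPEstar G = ⊤) (x : G) : x * x = 1 := by
  by_contra hx
  obtain ⟨g, hxg, hmax⟩ := exists_mem_zpowers_isMaximalCyclic x
  have hg : g ∈ nonIsolated G := mem_nonIsolated_of_isMaximalCyclic hG hmax
  have hg_ne : g ≠ g⁻¹ := fun h' =>
    hx (mul_self_eq_one_of_mem_zpowers (by rw [← mul_inv_cancel g, ← h']) hxg)
  have hadj : (coPEstar G).Adj ⟨g, hg⟩ ⟨g⁻¹, inv_mem_nonIsolated hg⟩ := by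
    rw [h, SimpleGraph.top_adj, ne_eq, Subtype.mk.injEq]
    exact hg_ne
  exact hadj.2 ⟨g, mem_zpowers g, inv_mem (mem_zpowers g)⟩

end CoPE

theorem coPEstar_complete_iff {G : Type*} [Group G] [Finite G] (hG : ¬ IsCyclic G) :
    coPEstar G = ⊤ ↔ ∀ x : G, x * x = 1 :=
  ⟨mul_self_eq_one_of_coPEstar_eq_top hG, coPEstar_eq_top_of_mul_self_eq_one⟩
end

section
/- Let n ≥ 3 and let D_{2n} be the dihedral group of order 2n. Then the graph co-P_E(D_{2n}*) is Eulerian (connected with a closed trail traversing every edge exactly once) if and only if n is even. -/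
open scoped Classical in
/-- A graph is Eulerian if it is connected and admits a closed trail traversing
every edge exactly once. -/
def IsEulerianGraph {V : Type*} (Γ : SimpleGraph V) : Prop :=
  Γ.Connected ∧ ∃ (v : V) (p : Γ.Walk v v), p.IsEulerian

/-!
In `D_{2n}` the identity is the only isolated vertex of co-P_E. A reflection `sr i` is adjacent
to every other non-identity element, while a non-identity rotation is adjacent exactly to the `n`
reflections (two rotations lie in `⟨r 1⟩`). Hence co-P_E(D_{2n}*) is connected through `sr 0`,
reflections have degree `2n - 2` and rotations degree `n`, and Euler's theorem finishes the proof.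

Euler's theorem is proved with a longest trail. Every edge at its last vertex is on it (otherwise
the trail extends), so if it were open that vertex would have odd degree. It uses every edge, since
otherwise, by connectivity, an unused edge leaves its support, and rotating the trail to that
vertex and prepending the edge gives a longer trail.
-/

namespace SimpleGraph.Walk

variable {V : Type*} {G : SimpleGraph V}

lemma IsTrail.mem_edges_of_forall_isTrail_length_le {u v w : V} {p : G.Walk u v}
    (hp : p.IsTrail)
    (hmax : ∀ (u' v' : V) (p' : G.Walk u' v'), p'.IsTrail → p'.length ≤ p.length)
    (h : G.Adj v w) : s(v, w) ∈ p.edges := by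
  by_contra hw
  have hq : (p.concat h).IsTrail := by
    rw [isTrail_def, edges_concat]
    exact hp.edges_nodup.concat hw
  have := hmax _ _ _ hq
  rw [length_concat] at this
  omega

lemma IsTrail.degree_eq_countP_edges [DecidableEq V] {u v x : V} [Fintype (G.neighborSet x)]
    {p : G.Walk u v} (hp : p.IsTrail) (h : ∀ y, G.Adj x y → s(x, y) ∈ p.edges) :
    G.degree x = p.edges.countP (x ∈ ·) := by
  rw [← card_incidenceFinset_eq_degree, List.countP_eq_length_filter,
    ← List.toFinset_card_of_nodup (hp.edges_nodup.filter _)]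
  congr 1
  ext e
  simp only [List.mem_toFinset, List.mem_filter, mem_incidenceFinset, incidenceSet,
    Set.mem_sep_iff, decide_eq_true_eq]
  refine ⟨fun ⟨he, hx⟩ => ⟨?_, hx⟩, fun ⟨he, hx⟩ => ⟨p.edges_subset_edgeSet he, hx⟩⟩
  rw [← Sym2.other_spec hx] at he ⊢
  exact h _ he

lemma exists_adj_notMem_edges_of_preconnected (hG : G.Preconnected) {u v : V} (p : G.Walk u v)
    {e : Sym2 V} (he : e ∈ G.edgeSet) (hep : e ∉ p.edges) :
    ∃ c ∈ p.support, ∃ d, G.Adj c d ∧ s(c, d) ∉ p.edges := by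
  induction e using Sym2.ind with | _ x y => ?_
  -- walk from the start of `p` towards `x`; the first edge not in `p` is the one we want
  suffices ∀ {a} (q : G.Walk a x), a ∈ p.support →
      ∃ c ∈ p.support, ∃ d, G.Adj c d ∧ s(c, d) ∉ p.edges from
    (hG u x).elim fun q => this q p.start_mem_support
  intro a q
  induction q with
  | nil => exact fun ha => ⟨_, ha, _, he, hep⟩
  | @cons a b _ hab _ ih =>
    intro ha
    by_cases hm : s(a, b) ∈ p.edges
    · exact ih he hep (p.snd_mem_support_of_mem_edges hm)
    · exact ⟨a, ha, b, hab, hm⟩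

lemma IsTrail.isEulerian_of_forall_isTrail_length_le [DecidableEq V] (hG : G.Preconnected)
    {u : V} {p : G.Walk u u} (hp : p.IsTrail)
    (hmax : ∀ (u' v' : V) (p' : G.Walk u' v'), p'.IsTrail → p'.length ≤ p.length) :
    p.IsEulerian := by
  refine hp.isEulerian_of_forall_mem fun e he => ?_
  by_contra hep
  obtain ⟨c, hc, d, hcd, hcdp⟩ := exists_adj_notMem_edges_of_preconnected hG p he hep
  have hq : (cons hcd.symm (p.rotate c hc)).IsTrail := by
    rw [isTrail_cons, Sym2.eq_swap, (p.rotate_edges c hc).perm.mem_iff]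
    exact ⟨hp.rotate hc, hcdp⟩
  have := hmax _ _ _ hq
  rw [length_cons, length_rotate] at this
  omega

end SimpleGraph.Walk

namespace SimpleGraph

open Walk

theorem Connected.exists_isEulerian_of_even_degree {V : Type*} {G : SimpleGraph V} [Fintype V]
    [DecidableEq V] [DecidableRel G.Adj] (hG : G.Connected) (h : ∀ v, Even (G.degree v)) :
    ∃ (v : V) (p : G.Walk v v), p.IsEulerian := by
  have := hG.nonempty
  obtain ⟨u, v, p, hp, hmax⟩ := exists_isTrail_forall_isTrail_length_le_length G
  obtain rfl : u = v := by
    by_contra huv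
    have hdeg := hp.degree_eq_countP_edges (x := v) fun _ =>
      hp.mem_edges_of_forall_isTrail_length_le hmax
    exact ((hp.even_countP_edges_iff v).mp (hdeg ▸ h v) huv).2 rfl
  exact ⟨u, p, hp.isEulerian_of_forall_isTrail_length_le hG.preconnected hmax⟩

end SimpleGraph

open SimpleGraph in
theorem isEulerianGraph_iff {V : Type*} [Fintype V] (Γ : SimpleGraph V) [DecidableRel Γ.Adj] :
    IsEulerianGraph Γ ↔ Γ.Connected ∧ ∀ v, Even (Γ.degree v) := by
  classical
  refine ⟨fun ⟨hΓ, _, _, hp⟩ => ⟨hΓ, fun x => ?_⟩, fun ⟨hΓ, h⟩ => ⟨hΓ, ?_⟩⟩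
  · exact hp.even_degree_iff.mpr fun h => absurd rfl h
  · convert hΓ.exists_isEulerian_of_even_degree h

section coPE

variable {G : Type*} [Group G]

lemma not_coPE_adj_one (x : G) : ¬ (coPE G).Adj 1 x :=
  fun h => h.2 ⟨x, one_mem _, Subgroup.mem_zpowers x⟩

lemma ne_one_of_mem_nonIsolated {x : G} (hx : x ∈ nonIsolated G) : x ≠ 1 := by
  rintro rfl
  obtain ⟨y, hy⟩ := hx
  exact not_coPE_adj_one y hy

open Classical in
lemma degree_coPEstar [Fintype G] (x : nonIsolated G) :
    (coPEstar G).degree x = (coPE G).degree x :=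
  SimpleGraph.degree_induce_of_neighborSet_subset fun _ hy => ⟨x, hy.symm⟩

end coPE

namespace DihedralGroup

open Subgroup

variable {n : ℕ}

lemma r_eq_one_iff {i : ZMod n} : (r i : DihedralGroup n) = 1 ↔ i = 0 :=
  ⟨fun h => r.inj (h.trans one_def), fun h => h ▸ r_zero⟩

lemma sr_ne_one (i : ZMod n) : (sr i : DihedralGroup n) ≠ 1 := nofun

lemma eq_one_or_eq_of_mem_zpowers_sr {i : ZMod n} {x : DihedralGroup n}
    (hx : x ∈ zpowers (sr i)) : x = 1 ∨ x = sr i := by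
  obtain ⟨k, rfl⟩ := hx
  dsimp only
  rw [← zpow_mod_orderOf, orderOf_sr]
  rcases Int.emod_two_eq_zero_or_one k with hk | hk <;> simp [hk]

lemma exists_eq_r_of_mem_zpowers_r {i : ZMod n} {x : DihedralGroup n}
    (hx : x ∈ zpowers (r i)) : ∃ j, x = r j := by
  obtain ⟨k, rfl⟩ := hx
  exact ⟨_, r_zpow i k⟩

lemma r_mem_zpowers_r_one (i : ZMod n) : r i ∈ zpowers (r 1 : DihedralGroup n) :=
  ⟨(i.cast : ℤ), by simp only [r_one_zpow, ZMod.intCast_zmod_cast]⟩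

lemma coPE_adj_sr_iff {i : ZMod n} {x : DihedralGroup n} :
    (coPE _).Adj (sr i) x ↔ x ≠ 1 ∧ x ≠ sr i := by
  refine ⟨fun h => ⟨fun hx => not_coPE_adj_one _ (hx ▸ h.symm), h.ne.symm⟩,
    fun ⟨hx1, hxi⟩ => ⟨hxi.symm, ?_⟩⟩
  rintro ⟨z, hi, hx⟩
  cases z with
  | r k =>
    obtain ⟨j, hj⟩ := exists_eq_r_of_mem_zpowers_r hi
    cases hj
  | sr k =>
    rcases eq_one_or_eq_of_mem_zpowers_sr hi with h | h
    · cases h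
    cases sr.inj h
    exact (eq_one_or_eq_of_mem_zpowers_sr hx).elim hx1 hxi

lemma coPE_adj_r_iff {i : ZMod n} (hi : i ≠ 0) {x : DihedralGroup n} :
    (coPE _).Adj (r i) x ↔ ∃ j, x = sr j := by
  constructor
  · rintro ⟨-, h⟩
    cases x with
    | r j => exact (h ⟨r 1, r_mem_zpowers_r_one i, r_mem_zpowers_r_one j⟩).elim
    | sr j => exact ⟨j, rfl⟩
  · rintro ⟨j, rfl⟩
    exact (coPE_adj_sr_iff.mpr ⟨mt r_eq_one_iff.mp hi, nofun⟩).symm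

lemma mem_nonIsolated_iff (hn : n ≠ 1) {x : DihedralGroup n} :
    x ∈ nonIsolated (DihedralGroup n) ↔ x ≠ 1 := by
  refine ⟨ne_one_of_mem_nonIsolated, fun hx => ?_⟩
  have : Nontrivial (ZMod n) := ZMod.nontrivial_iff.mpr hn
  by_cases h : x = sr 0
  · exact ⟨sr 1, h ▸ coPE_adj_sr_iff.mpr ⟨sr_ne_one 1, by simp⟩⟩
  · exact ⟨sr 0, (coPE_adj_sr_iff.mpr ⟨hx, h⟩).symm⟩

open SimpleGraph in
lemma coPEstar_connected (hn : n ≠ 1) : (coPEstar (DihedralGroup n)).Connected :=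
  Connected.of_isUniversal (v := ⟨sr 0, (mem_nonIsolated_iff hn).mpr (sr_ne_one 0)⟩)
    fun w hw => coPE_adj_sr_iff.mpr
      ⟨ne_one_of_mem_nonIsolated w.2, fun h => hw (Subtype.ext h.symm)⟩

open Finset SimpleGraph

variable [NeZero n]

open Classical in
lemma degree_coPE_sr (i : ZMod n) : (coPE (DihedralGroup n)).degree (sr i) = 2 * (n - 1) := by
  have : (coPE _).neighborFinset (sr i) = (univ.erase 1).erase (sr i) := by
    ext
    simp [coPE_adj_sr_iff, and_comm]
  rw [← card_neighborFinset_eq_degree, this, card_erase_of_mem (by simp [sr_ne_one]),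
    card_erase_of_mem (mem_univ _), card_univ, card]
  omega

open Classical in
lemma degree_coPE_r {i : ZMod n} (hi : i ≠ 0) : (coPE (DihedralGroup n)).degree (r i) = n := by
  have : (coPE _).neighborFinset (r i) = univ.image sr := by
    ext
    simp [coPE_adj_r_iff hi, eq_comm]
  rw [← card_neighborFinset_eq_degree, this, card_image_of_injective _ fun _ _ => sr.inj,
    card_univ, ZMod.card]

open Classical in
lemma forall_even_degree_coPE_iff (hn : n ≠ 1) :
    (∀ x : DihedralGroup n, x ≠ 1 → Even ((coPE _).degree x)) ↔ Even n := by
  have : Nontrivial (ZMod n) := ZMod.nontrivial_iff.mpr hn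
  refine ⟨fun h => ?_, fun h x hx => ?_⟩
  · simpa [degree_coPE_r one_ne_zero] using h (r 1) (mt r_eq_one_iff.mp one_ne_zero)
  · cases x with
    | r i => rwa [degree_coPE_r (mt r_eq_one_iff.mpr hx)]
    | sr i => rw [degree_coPE_sr]; exact even_two_mul _

end DihedralGroup

open DihedralGroup in
theorem coPEstar_dihedral_eulerian_iff (n : ℕ) (hn : 3 ≤ n) :
    IsEulerianGraph (coPEstar (DihedralGroup n)) ↔ Even n := by
  classical
  have : NeZero n := ⟨by omega⟩
  have hn1 : n ≠ 1 := by omega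
  rw [isEulerianGraph_iff, ← forall_even_degree_coPE_iff hn1]
  simp only [coPEstar_connected hn1, true_and, degree_coPEstar, Subtype.forall,
    mem_nonIsolated_iff hn1]
end
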